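/- arXiv:1703.08762 — 4 statements merged into one kernel-verified Lean document; each statement's English description precedes it below -/
import Mathlib

section
/- A greedy schedule that at each of d steps adds the next repetition of a topic with maximal marginal benefit achieves the maximum possible group benefit among all schedules of length d. -/
/-- Group benefit of a count function `c` (a schedule given by topic counts). -/
noncomputable def groupBenefit {S T : Type*} [Fintype T] (P : Finset S)
    (req : S → T → ℕ) (c : T → ℕ) : ℝ :=
  ∑ t, ∑ s ∈ P, (min (c t) (req s t) : ℝ) / (req s t)

/-- Marginal benefit to the group of the `i`-th repetition of topic `t`. -/
noncomputable def marg {S T : Type*} (P : Finset S) (req : S → T → ℕ)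
    (t : T) (i : ℕ) : ℝ :=
  ∑ s ∈ P, if i ≤ req s t then (1 : ℝ) / req s t else 0

/-!
Adding one repetition of topic `t` to a schedule `c` raises the group benefit by exactly
`marg t (c t + 1)`, and these marginal benefits are antitone in the repetition index. By
induction on the length, each greedy schedule is optimal: given a competitor `c'` with one
more step, some topic `t'` has `c t' < c' t'`; removing a repetition of `t'` from `c'` leaves
a schedule no better than `c`, and costs `marg t' (c' t') ≤ marg t' (c t' + 1)`, which is at
most the marginal benefit of the greedy choice.
-/

open Finset Function

theorem Finset.sum_update_add_apply {ι M : Type*} [Fintype ι] [DecidableEq ι] [AddCommMonoid M]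
    (f : ι → M) (i : ι) (b : M) : ∑ j, update f i b j + f i = ∑ j, f j + b := by
  rw [sum_update_of_mem (mem_univ i), sum_eq_add_sum_sdiff_singleton_of_mem (mem_univ i)]
  abel

lemma min_add_one_div (n r : ℕ) :
    (min ((n + 1 : ℕ) : ℝ) r) / r = (min (n : ℝ) r) / r + if n + 1 ≤ r then (1 : ℝ) / r else 0 := by
  split_ifs with h
  · rw [min_eq_left (by exact_mod_cast h), min_eq_left (by exact_mod_cast h.trans' n.le_succ)]
    push_cast
    rw [add_div]
  · rw [min_eq_right (by exact_mod_cast (by omega : r ≤ n + 1)),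
      min_eq_right (by exact_mod_cast (by omega : r ≤ n)), add_zero]

section Schedule

variable {S T : Type*} (P : Finset S) (req : S → T → ℕ)

lemma marg_antitone (t : T) : Antitone (marg P req t) := by
  intro i j hij
  refine sum_le_sum fun s _ => ?_
  split_ifs with hj hi hi
  · exact le_rfl
  · exact absurd (hij.trans hj) hi
  · positivity
  · exact le_rfl

variable [Fintype T]

def IsOptimalSchedule (d : ℕ) (c : T → ℕ) : Prop :=
  ∑ t, c t = d ∧ ∀ c' : T → ℕ, ∑ t, c' t = d → groupBenefit P req c' ≤ groupBenefit P req c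

lemma isOptimalSchedule_zero : IsOptimalSchedule P req 0 fun _ => 0 := by
  refine ⟨sum_const_zero, fun c' hc' => ?_⟩
  have : c' = fun _ => 0 := funext fun t => sum_eq_zero_iff.mp hc' t (mem_univ t)
  rw [this]

variable [DecidableEq T]

lemma groupBenefit_update_add_one (c : T → ℕ) (t : T) :
    groupBenefit P req (update c t (c t + 1)) = groupBenefit P req c + marg P req t (c t + 1) := by
  have topic : ∀ t', ∑ s ∈ P, (min (update c t (c t + 1) t' : ℝ) (req s t')) / req s t' =
      ∑ s ∈ P, (min (c t' : ℝ) (req s t')) / req s t' +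
        if t' = t then marg P req t (c t + 1) else 0 := by
    intro t'
    rcases eq_or_ne t' t with rfl | h
    · rw [update_self, if_pos rfl, marg, ← sum_add_distrib]
      exact sum_congr rfl fun s _ => min_add_one_div _ _
    · rw [update_of_ne h, if_neg h, add_zero]
  simp only [groupBenefit, topic, sum_add_distrib, sum_ite_eq', mem_univ, if_true]

lemma groupBenefit_eq_update_sub_one {c : T → ℕ} {t : T} (h : c t ≠ 0) :
    groupBenefit P req c = groupBenefit P req (update c t (c t - 1)) + marg P req t (c t) := by
  have := groupBenefit_update_add_one P req (update c t (c t - 1)) t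
  rwa [update_self, Nat.sub_add_cancel (Nat.pos_of_ne_zero h), update_idem, update_eq_self]
    at this

lemma IsOptimalSchedule.update_add_one {d : ℕ} {c : T → ℕ} {t : T}
    (hc : IsOptimalSchedule P req d c)
    (hmax : ∀ t', marg P req t' (c t' + 1) ≤ marg P req t (c t + 1)) :
    IsOptimalSchedule P req (d + 1) (update c t (c t + 1)) := by
  obtain ⟨hsum, hopt⟩ := hc
  refine ⟨by have := sum_update_add_apply c t (c t + 1); omega, fun c' hc' => ?_⟩
  obtain ⟨t', -, ht'⟩ := exists_lt_of_sum_lt ((hsum.trans_lt d.lt_succ_self).trans_eq hc'.symm)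
  have hsum' : ∑ i, update c' t' (c' t' - 1) i = d := by
    have := sum_update_add_apply c' t' (c' t' - 1); omega
  calc groupBenefit P req c'
      = groupBenefit P req (update c' t' (c' t' - 1)) + marg P req t' (c' t') :=
        groupBenefit_eq_update_sub_one P req (by omega)
    _ ≤ groupBenefit P req c + marg P req t (c t + 1) :=
        add_le_add (hopt _ hsum') ((marg_antitone P req t' ht').trans (hmax t'))
    _ = groupBenefit P req (update c t (c t + 1)) := (groupBenefit_update_add_one P req c t).symm

end Schedule

theorem greedy_schedule_optimal_general {S T : Type*} [Fintype T] [DecidableEq T]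
    (P : Finset S) (req : S → T → ℕ)
    (d : ℕ) (c : ℕ → T → ℕ)
    (h0 : c 0 = fun _ => 0)
    (hstep : ∀ k, k < d → ∃ t, c (k + 1) = Function.update (c k) t (c k t + 1) ∧
      ∀ t', marg P req t' (c k t' + 1) ≤ marg P req t (c k t + 1)) :
    ∀ c' : T → ℕ, (∑ t, c' t) = d → groupBenefit P req c' ≤ groupBenefit P req (c d) := by
  have greedy_optimal : ∀ k ≤ d, IsOptimalSchedule P req k (c k) := by
    intro k hk
    induction k with
    | zero => exact h0 ▸ isOptimalSchedule_zero P req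
    | succ k ih =>
      obtain ⟨t, hck, hmax⟩ := hstep k hk
      exact hck ▸ (ih (by omega)).update_add_one P req hmax
  exact (greedy_optimal d le_rfl).2

/-- A greedy schedule that at each of `d` steps adds the next repetition of a
topic of maximal marginal benefit achieves the maximum group benefit among all
schedules of length `d`. -/
theorem greedy_schedule_optimal {S T : Type*} [Fintype T] [DecidableEq T]
    (P : Finset S) (req : S → T → ℕ) (hreq : ∀ s t, 1 ≤ req s t)
    (d : ℕ) (c : ℕ → T → ℕ)
    (h0 : c 0 = fun _ => 0)
    (hstep : ∀ k, k < d → ∃ t, c (k + 1) = Function.update (c k) t (c k t + 1) ∧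
      ∀ t', marg P req t' (c k t' + 1) ≤ marg P req t (c k t + 1)) :
    ∀ c' : T → ℕ, (∑ t, c' t) = d → groupBenefit P req c' ≤ groupBenefit P req (c d) :=
  greedy_schedule_optimal_general P req d c h0 hstep
end

section
/- The maximal group benefit achievable by a schedule of length d is a concave function of d: if opt(d) denotes the maximum of B(P,·) over schedules of length d, then opt(d+1) − opt(d) ≤ opt(d) − opt(d−1) for all d ≥ 1. -/
/-- Maximal group benefit achievable by a schedule of length `d`. -/
noncomputable def opt {S T : Type*} [Fintype T] (P : Finset S)
    (req : S → T → ℕ) (d : ℕ) : ℝ :=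
  sSup {x : ℝ | ∃ c : T → ℕ, (∑ t, c t) = d ∧ x = groupBenefit P req c}

open Finset

noncomputable def topicBenefit {S T : Type*} (P : Finset S) (req : S → T → ℕ) (t : T)
    (n : ℕ) : ℝ :=
  ∑ s ∈ P, (min n (req s t) : ℝ) / req s t

lemma Nat.min_succ_add_min_le {k m : ℕ} (h : m ≤ k) (r : ℕ) :
    min (k + 1) r + min m r ≤ min k r + min (m + 1) r := by
  omega

lemma topicBenefit_succ_add_le {S T : Type*} (P : Finset S) (req : S → T → ℕ) (t : T)
    {k m : ℕ} (h : m ≤ k) :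
    topicBenefit P req t (k + 1) + topicBenefit P req t m ≤
      topicBenefit P req t k + topicBenefit P req t (m + 1) := by
  simp only [topicBenefit, ← sum_add_distrib, ← add_div]
  refine sum_le_sum fun s _ ↦ div_le_div_of_nonneg_right ?_ (Nat.cast_nonneg _)
  exact_mod_cast Nat.min_succ_add_min_le h (req s t)

lemma sum_add_single {T M : Type*} [Fintype T] [DecidableEq T] [AddCommMonoid M] (c : T → M)
    (t₀ : T) (x : M) : ∑ t, (c + Pi.single t₀ x : T → M) t = ∑ t, c t + x := by
  simp [sum_add_distrib]

section Benefit

variable {S T : Type*} [Fintype T] (P : Finset S) (req : S → T → ℕ)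

lemma groupBenefit_eq_sum_topicBenefit (c : T → ℕ) :
    groupBenefit P req c = ∑ t, topicBenefit P req t (c t) :=
  rfl

lemma bddAbove_range_groupBenefit : BddAbove (Set.range (groupBenefit P req)) := by
  refine ⟨∑ _t : T, ∑ _s ∈ P, (1 : ℝ), ?_⟩
  rintro _ ⟨c, rfl⟩
  unfold groupBenefit
  gcongr with t _ s
  exact div_le_one_of_le₀ (by exact_mod_cast min_le_right _ _) (Nat.cast_nonneg _)

lemma groupBenefit_le_opt {c : T → ℕ} {d : ℕ} (hc : ∑ t, c t = d) :
    groupBenefit P req c ≤ opt P req d := by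
  refine le_csSup ((bddAbove_range_groupBenefit P req).mono ?_) ⟨c, hc, rfl⟩
  rintro _ ⟨c, -, rfl⟩
  exact ⟨c, rfl⟩

lemma opt_le [Nonempty T] {d : ℕ} {x : ℝ}
    (h : ∀ c : T → ℕ, ∑ t, c t = d → groupBenefit P req c ≤ x) : opt P req d ≤ x := by
  classical
  obtain ⟨t₀⟩ := ‹Nonempty T›
  refine csSup_le ⟨_, Pi.single t₀ d, by simp, rfl⟩ ?_
  rintro _ ⟨c, hc, rfl⟩
  exact h c hc

lemma groupBenefit_add_single_add_le [DecidableEq T] {a b : T → ℕ} {t₀ : T}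
    (h : b t₀ ≤ a t₀) :
    groupBenefit P req (a + Pi.single t₀ 1) + groupBenefit P req b ≤
      groupBenefit P req a + groupBenefit P req (b + Pi.single t₀ 1) := by
  simp only [groupBenefit_eq_sum_topicBenefit, ← sum_add_distrib]
  refine sum_le_sum fun t _ ↦ ?_
  rcases eq_or_ne t t₀ with rfl | ht
  · simpa using topicBenefit_succ_add_le P req t h
  · simp [Pi.single_eq_of_ne ht]

lemma groupBenefit_add_groupBenefit_le_two_mul_opt {c₂ c₀ : T → ℕ} {n : ℕ}
    (h₂ : ∑ t, c₂ t = n + 2) (h₀ : ∑ t, c₀ t = n) :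
    groupBenefit P req c₂ + groupBenefit P req c₀ ≤ 2 * opt P req (n + 1) := by
  classical
  obtain ⟨t₀, -, hlt⟩ := exists_lt_of_sum_lt (s := univ) (f := c₀) (g := c₂) (by omega)
  set a := c₂ - Pi.single t₀ 1
  have ha : c₂ = a + Pi.single t₀ 1 := by
    ext t
    rcases eq_or_ne t t₀ with rfl | ht
    · simp only [a, Pi.add_apply, Pi.sub_apply, Pi.single_eq_same]
      omega
    · simp [a, Pi.single_eq_of_ne ht]
  have hle : c₀ t₀ ≤ a t₀ := by
    simp only [a, Pi.sub_apply, Pi.single_eq_same]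
    omega
  have hsum_a : ∑ t, a t = n + 1 := by
    rw [ha, sum_add_single] at h₂
    omega
  have hsum_b : ∑ t, (c₀ + Pi.single t₀ 1 : T → ℕ) t = n + 1 := by
    rw [sum_add_single, h₀]
  calc groupBenefit P req c₂ + groupBenefit P req c₀
      ≤ groupBenefit P req a + groupBenefit P req (c₀ + Pi.single t₀ 1) := by
        rw [ha]
        exact groupBenefit_add_single_add_le P req hle
    _ ≤ 2 * opt P req (n + 1) := by
        linarith [groupBenefit_le_opt P req hsum_a, groupBenefit_le_opt P req hsum_b]

lemma opt_add_two_add_opt_le [Nonempty T] (n : ℕ) :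
    opt P req (n + 2) + opt P req n ≤ 2 * opt P req (n + 1) := by
  have : opt P req (n + 2) ≤ 2 * opt P req (n + 1) - opt P req n :=
    opt_le P req fun c₂ h₂ ↦ le_sub_comm.1 <| opt_le P req fun c₀ h₀ ↦ by
      linarith [groupBenefit_add_groupBenefit_le_two_mul_opt P req h₂ h₀]
  linarith

end Benefit

theorem opt_concave_general {S T : Type*} [Fintype T] [Nonempty T]
    (P : Finset S) (req : S → T → ℕ)
    (d : ℕ) (hd : 1 ≤ d) :
    opt P req (d + 1) - opt P req d ≤ opt P req d - opt P req (d - 1) := by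
  obtain ⟨n, rfl⟩ := Nat.exists_eq_add_of_le' hd
  have := opt_add_two_add_opt_le P req n
  simp only [add_tsub_cancel_right]
  linarith

/-- The maximal group benefit is a concave function of the deadline `d`:
`opt(d+1) − opt(d) ≤ opt(d) − opt(d−1)` for all `d ≥ 1`. -/
theorem opt_concave {S T : Type*} [Fintype T] [Nonempty T]
    (P : Finset S) (req : S → T → ℕ) (hreq : ∀ s t, 1 ≤ req s t)
    (d : ℕ) (hd : 1 ≤ d) :
    opt P req (d + 1) - opt P req d ≤ opt P req d - opt P req (d - 1) :=
  opt_concave_general P req d hd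
end

section
/- For a single student s, the optimal schedule of length d has benefit equal to the maximum over count functions c of Σ_t min(c_t, req(s,t))/req(s,t), and this maximum is achieved by a greedy rule that repeatedly adds a topic with the smallest requirement among topics not yet fully covered (adding all req(s,t) repetitions of topics in increasing order of req(s,t) as budget allows, then a partial block). -/
/-!
Write `S k` for the total requirement of the first `k` topics of the sorted list. A topic left
unfinished by the greedy schedule at position `i` and a topic served at position `j` satisfy
`S j < d < S (i+1)`, hence `j ≤ i`: no served topic needs more than an unfinished one.
Let `R` be the least requirement of an unfinished topic: every topic is either full with
requirement at most `R`, or empty with requirement at least `R`, or has requirement exactly `R`.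
Hence `(m t - c t) / req t ≤ (m t - c t) / R` for the coverage `m` of any other schedule, and
summing gives `benefit m - benefit c ≤ (∑ m - ∑ c) / R ≤ 0`.
-/

open Finset

section Threshold

variable {ι 𝕜 : Type*} [Field 𝕜] [LinearOrder 𝕜] [IsStrictOrderedRing 𝕜]
  {s : Finset ι} {r m c : ι → 𝕜}

theorem sum_div_le_sum_div_of_threshold {R : 𝕜} (hR : 0 < R) (hr : ∀ i ∈ s, 0 < r i)
    (hmc : ∑ i ∈ s, m i ≤ ∑ i ∈ s, c i)
    (hsplit : ∀ i ∈ s, (m i ≤ c i ∧ r i ≤ R) ∨ (c i ≤ m i ∧ R ≤ r i)) :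
    ∑ i ∈ s, m i / r i ≤ ∑ i ∈ s, c i / r i := by
  have hterm : ∀ i ∈ s, (m i - c i) / r i ≤ (m i - c i) / R := by
    intro i hi
    rcases hsplit i hi with ⟨hle, hrR⟩ | ⟨hle, hRr⟩
    · have := div_le_div_of_nonneg_left (sub_nonneg.2 hle) (hr i hi) hrR
      rwa [← neg_sub, neg_div, neg_div, neg_le_neg_iff]
    · exact div_le_div_of_nonneg_left (sub_nonneg.2 hle) hR hRr
  calc ∑ i ∈ s, m i / r i = ∑ i ∈ s, c i / r i + ∑ i ∈ s, (m i - c i) / r i := by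
        rw [← sum_add_distrib]; congr! 1 with i; ring
    _ ≤ ∑ i ∈ s, c i / r i + ∑ i ∈ s, (m i - c i) / R :=
        (add_le_add_iff_left _).2 (sum_le_sum hterm)
    _ = ∑ i ∈ s, c i / r i + (∑ i ∈ s, m i - ∑ i ∈ s, c i) / R := by
        rw [← sum_div, sum_sub_distrib]
    _ ≤ ∑ i ∈ s, c i / r i :=
        add_le_of_nonpos_right (div_nonpos_of_nonpos_of_nonneg (sub_nonpos.2 hmc) hR.le)

theorem sum_div_le_sum_div_of_exchange (hr : ∀ i ∈ s, 0 < r i) (hcr : ∀ i ∈ s, c i ≤ r i)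
    (hm₀ : ∀ i ∈ s, 0 ≤ m i) (hmr : ∀ i ∈ s, m i ≤ r i) (hmc : ∑ i ∈ s, m i ≤ ∑ i ∈ s, c i)
    (hexch : ∀ i ∈ s, ∀ j ∈ s, c i < r i → 0 < c j → r j ≤ r i) :
    ∑ i ∈ s, m i / r i ≤ ∑ i ∈ s, c i / r i := by
  obtain hfull | hne := (s.filter fun i => c i < r i).eq_empty_or_nonempty
  · refine sum_le_sum fun i hi => div_le_div_of_nonneg_right ?_ (hr i hi).le
    exact (hmr i hi).trans (not_lt.1 (filter_eq_empty_iff.1 hfull hi))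
  obtain ⟨k, hk, hkmin⟩ := exists_min_image _ r hne
  rw [mem_filter] at hk
  refine sum_div_le_sum_div_of_threshold (hr k hk.1) hr hmc fun i hi => ?_
  by_cases hunfinished : c i < r i
  · have hRr : r k ≤ r i := hkmin i (mem_filter.2 ⟨hi, hunfinished⟩)
    by_cases hserved : 0 < c i
    · have hrR := hexch k hk.1 i hi hk.2 hserved
      rcases le_total (m i) (c i) with h | h
      exacts [Or.inl ⟨h, hrR⟩, Or.inr ⟨h, hRr⟩]
    · exact Or.inr ⟨(not_lt.1 hserved).trans (hm₀ i hi), hRr⟩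
  · have hfull : c i = r i := le_antisymm (hcr i hi) (not_lt.1 hunfinished)
    exact Or.inl ⟨hfull ▸ hmr i hi, hexch k hk.1 i hi hk.2 (hfull ▸ hr i hi)⟩

end Threshold

section Greedy

variable {α : Type*} (w : α → ℕ)

def IsGreedySchedule (L : List α) (d : ℕ) (c : α → ℕ) : Prop :=
  ∀ i : Fin L.length, c (L.get i) = min (w (L.get i)) (d - ((L.take i.1).map w).sum)

variable {w} {c : α → ℕ}

theorem IsGreedySchedule.sum_map {L : List α} {d : ℕ} (hc : IsGreedySchedule w L d c) :
    (L.map c).sum = min d (L.map w).sum := by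
  induction L generalizing d with
  | nil => simp
  | cons t L ih =>
    have hhead : c t = min (w t) d := by simpa using hc ⟨0, by simp⟩
    have htail : (L.map c).sum = min (d - w t) (L.map w).sum :=
      ih fun i => by simpa [Nat.sub_sub] using hc i.succ
    simp only [List.map_cons, List.sum_cons, hhead, htail]
    omega

theorem IsGreedySchedule.le {L : List α} {d : ℕ} (hc : IsGreedySchedule w L d c) {t : α}
    (ht : t ∈ L) : c t ≤ w t := by
  obtain ⟨i, rfl⟩ := List.mem_iff_get.1 ht
  exact hc i ▸ min_le_left _ _

theorem IsGreedySchedule.exchange {L : List α} {d : ℕ} (hc : IsGreedySchedule w L d c)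
    (hsorted : L.Pairwise fun a b => w a ≤ w b) {s t : α} (hs : s ∈ L) (ht : t ∈ L)
    (hunfinished : c s < w s) (hserved : 0 < c t) : w t ≤ w s := by
  obtain ⟨i, rfl⟩ := List.mem_iff_get.1 hs
  obtain ⟨j, rfl⟩ := List.mem_iff_get.1 ht
  have hS_succ : ((L.take (i + 1)).map w).sum = ((L.take i).map w).sum + w (L.get i) := by
    rw [List.map_take, List.map_take, List.sum_take_succ _ _ (by simp), List.getElem_map]
    rfl
  have hS_mono : Monotone fun k => ((L.take k).map w).sum := fun k k' hkk' =>
    ((List.take_sublist_take_left hkk').map w).sum_le_sum fun _ _ => Nat.zero_le _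
  have hi : d < ((L.take (i + 1)).map w).sum := by have := hc i; omega
  have hj : ((L.take j).map w).sum < d := by have := hc j; omega
  have hji : j ≤ i := Fin.le_iff_val_le_val.2 <| by
    by_contra! h
    have : ((L.take (i + 1)).map w).sum ≤ ((L.take j).map w).sum := hS_mono (Nat.succ_le_of_lt h)
    omega
  exact hsorted.rel_get_of_le hji

end Greedy

/-- For a single student, the greedy schedule that processes topics in
nondecreasing order of requirement—fully covering each topic as long as budget
remains, then a partial block—achieves the maximum benefit
`∑_t min(c_t, req t)/req t` among all count functions summing to `d`. -/
theorem single_student_greedy_optimal {T : Type*} [Fintype T]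
    (req : T → ℕ) (hreq : ∀ t, 1 ≤ req t) (d : ℕ) (hd : d ≤ ∑ t, req t)
    (L : List T) (hnodup : L.Nodup) (hcomplete : ∀ t, t ∈ L)
    (hsorted : L.Pairwise (fun a b => req a ≤ req b))
    (c : T → ℕ)
    (hc : ∀ i : Fin L.length,
      c (L.get i) = min (req (L.get i)) (d - ((L.take i.1).map req).sum)) :
    (∑ t, c t) = d ∧
      ∀ c' : T → ℕ, (∑ t, c' t) = d →
        ∑ t, (min (c' t) (req t) : ℝ) / (req t)
          ≤ ∑ t, (min (c t) (req t) : ℝ) / (req t) := by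
  classical
  have hgreedy : IsGreedySchedule req L d c := hc
  have hsum_eq : ∀ f : T → ℕ, ∑ t, f t = (L.map f).sum := fun f => by
    rw [← List.sum_toFinset f hnodup,
      eq_univ_of_forall fun t => List.mem_toFinset.2 (hcomplete t)]
  have hcr : ∀ t, c t ≤ req t := fun t => hgreedy.le (hcomplete t)
  have htotal : ∑ t, c t = d := by
    rw [hsum_eq, hgreedy.sum_map, ← hsum_eq, min_eq_left hd]
  refine ⟨htotal, fun c' hc' => ?_⟩
  simp only [min_eq_left (Nat.cast_le.2 (hcr _))]
  refine sum_div_le_sum_div_of_exchange (fun t _ => by exact_mod_cast hreq t)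
    (fun t _ => by exact_mod_cast hcr t) (fun t _ => by positivity) (fun t _ => min_le_right _ _)
    ?_ fun s _ t _ hs ht => by
      exact_mod_cast hgreedy.exchange hsorted (hcomplete s) (hcomplete t)
        (by exact_mod_cast hs) (by exact_mod_cast ht)
  calc ∑ t, min (c' t : ℝ) (req t) ≤ ∑ t, (c' t : ℝ) := sum_le_sum fun t _ => min_le_left _ _
    _ = ∑ t, (c t : ℝ) := by exact_mod_cast hc'.trans htotal.symm
end

section
/- In the reduction from catalog segmentation to cohort selection with requirements req(s_i, t_j) = 1 if u_j ∈ S_i and req(s_i, t_j) = n·m³ otherwise, and deadline d = r ≤ m: for any student s and any schedule of length r, the floor of the student's benefit equals the number of distinct topics t appearing in the schedule with req(s,t) = 1, i.e. |S ∩ X| where X is the set of universe elements corresponding to topics in the schedule. -/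
/-!
A topic the student needs only once contributes `min (c u) 1`, i.e. `1` exactly when it is
scheduled; every other topic has requirement `K = n·m³`, which exceeds the length `r ≤ m` of the
whole schedule, so these topics contribute together at most `r / K < 1` and vanish under the floor.
-/

open Finset

section FloorBenefit

variable {U : Type*} [Fintype U]

def reductionReq [DecidableEq U] (S : Finset U) (K : ℕ) (u : U) : ℕ :=
  if u ∈ S then 1 else K

noncomputable def benefit (req c : U → ℕ) : ℝ :=
  ∑ u, min (c u : ℝ) (req u) / req u

lemma min_natCast_one (k : ℕ) : min (k : ℝ) 1 = if 1 ≤ k then 1 else 0 := by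
  rcases Nat.eq_zero_or_pos k with rfl | hk
  · simp
  · rw [if_pos (Nat.one_le_iff_ne_zero.2 hk.ne'), min_eq_right (by exact_mod_cast hk)]

lemma sum_min_div_mem_Ico {ι : Type*} (s : Finset ι) (c : ι → ℕ) {K : ℕ}
    (hK : ∑ u ∈ s, c u < K) :
    ∑ u ∈ s, min (c u : ℝ) K / K ∈ Set.Ico 0 1 := by
  have hK₀ : (0 : ℝ) < K := by exact_mod_cast (Nat.zero_le _).trans_lt hK
  refine ⟨sum_nonneg fun u _ => by positivity, ?_⟩
  calc ∑ u ∈ s, min (c u : ℝ) K / K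
      ≤ ∑ u ∈ s, (c u : ℝ) / K := sum_le_sum fun u _ => by gcongr; exact min_le_left _ _
    _ = (∑ u ∈ s, c u : ℕ) / K := by rw [← sum_div, Nat.cast_sum]
    _ < 1 := (div_lt_one hK₀).2 (by exact_mod_cast hK)

theorem floor_benefit_reductionReq [DecidableEq U] (S : Finset U) {K : ℕ} (c : U → ℕ)
    (hK : ∑ u, c u < K) :
    ⌊benefit (reductionReq S K) c⌋ = #(S ∩ univ.filter (fun u => 1 ≤ c u)) := by
  have hS : ∑ u ∈ univ.filter (· ∈ S), min (c u : ℝ) (1 : ℕ) / (1 : ℕ)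
      = #(S ∩ univ.filter (fun u => 1 ≤ c u)) := by
    simp only [Nat.cast_one, div_one, min_natCast_one, sum_boole, filter_filter]
    congr 2
    ext u
    simp
  have hrest := sum_min_div_mem_Ico (univ.filter (· ∉ S)) c
    ((sum_le_sum_of_subset (subset_univ _)).trans_lt hK)
  simp only [benefit, reductionReq, apply_ite (Nat.cast : ℕ → ℝ), apply_ite (min _),
    ite_div_ite, sum_ite]
  rw [hS, ← Int.cast_natCast, Int.floor_intCast_add, Int.floor_eq_zero_iff.2 hrest, add_zero]

end FloorBenefit

theorem reduction_floor_benefit_general (n m : ℕ) (hn : 2 ≤ n) (hm : 2 ≤ m)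
    {U : Type*} [Fintype U] [DecidableEq U]
    (Ssub : Finset U) (r : ℕ) (hr : r ≤ m)
    (c : U → ℕ) (hc : ∑ u, c u = r) :
    ⌊∑ u, (min (c u) (if u ∈ Ssub then 1 else n * m ^ 3) : ℝ) /
        ((if u ∈ Ssub then 1 else n * m ^ 3 : ℕ) : ℝ)⌋
      = ((Ssub ∩ Finset.univ.filter (fun u => 1 ≤ c u)).card : ℤ) := by
  have hK : ∑ u, c u < n * m ^ 3 :=
    calc ∑ u, c u ≤ m := hc ▸ hr
      _ < 2 * m := by omega
      _ ≤ n * m ^ 3 := Nat.mul_le_mul hn (Nat.le_self_pow (by norm_num) m)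
  convert floor_benefit_reductionReq Ssub c hK using 2
  simp [benefit, reductionReq]

/-- In the reduction from catalog segmentation, where a student has
requirement `1` on topics corresponding to elements of her set `Ssub` and
requirement `n·m³` on all other topics, for any schedule of length `r ≤ m`
the floor of her benefit equals the number of distinct topics of the schedule
lying in `Ssub`. -/
theorem reduction_floor_benefit (n m : ℕ) (hn : 2 ≤ n) (hm : 2 ≤ m)
    {U : Type*} [Fintype U] [DecidableEq U] (hU : Fintype.card U = m)
    (Ssub : Finset U) (r : ℕ) (hr : r ≤ m)
    (c : U → ℕ) (hc : ∑ u, c u = r) :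
    ⌊∑ u, (min (c u) (if u ∈ Ssub then 1 else n * m ^ 3) : ℝ) /
        ((if u ∈ Ssub then 1 else n * m ^ 3 : ℕ) : ℝ)⌋
      = ((Ssub ∩ Finset.univ.filter (fun u => 1 ≤ c u)).card : ℤ) :=
  reduction_floor_benefit_general n m hn hm Ssub r hr c hc
end
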